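/- The character χ_Z of an object Z of Z(G,α), defined on pairs of commuting elements (f,g) of G by χ_Z(f,g) = Tr_{Z_f}(g), satisfies the projective class-function property χ_Z(xfx^{-1}, xgx^{-1}) = [α(x,g|f)/α(xgx^{-1},x|f)] · χ_Z(f,g) for all x ∈ G and commuting f,g ∈ G. -/

import Mathlib

open scoped BigOperators

/-- `α(f,g|h) = α(f,g,h)⁻¹ · α(f, ghg⁻¹, g) · α((fg)h(fg)⁻¹, f, g)⁻¹`. -/
def aux2 {G : Type} [Group G] {k : Type} [Field k]
    (α : G → G → G → kˣ) (f g h : G) : kˣ :=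
  (α f g h)⁻¹ * α f (g * h * g⁻¹) g * (α ((f * g) * h * (f * g)⁻¹) f g)⁻¹

/-- An object of `Z(G,α)`: a finite-dimensional `G`-graded vector space (the grading
given by a complete system of orthogonal idempotent projections `p g`) together with
an `α`-projective `G`-action `ρ` compatible with the grading:
`ρ(x)(V_h) = V_{xhx⁻¹}` and `ρ(xy) = α(x,y|h)·ρ(x)ρ(y)` on `V_h`. -/
structure ZObj (k : Type) [Field k] (G : Type) [Group G] [Fintype G]
    (α : G → G → G → kˣ) where
  V : Type
  [ac : AddCommGroup V]
  [mo : Module k V]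
  [fin : Module.Finite k V]
  p : G → V →ₗ[k] V
  p_idem : ∀ g, p g ∘ₗ p g = p g
  p_orth : ∀ g h, g ≠ h → p g ∘ₗ p h = 0
  p_total : ∑ g : G, p g = LinearMap.id
  ρ : G → V →ₗ[k] V
  ρ_one : ρ 1 = LinearMap.id
  ρ_bij : ∀ g, Function.Bijective (ρ g)
  grade : ∀ g h, ρ g ∘ₗ p h = p (g * h * g⁻¹) ∘ₗ ρ g
  proj : ∀ g h x, ρ (g * h) ∘ₗ p x
    = ((aux2 α g h x : kˣ) : k) • ((ρ g ∘ₗ ρ h) ∘ₗ p x)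

attribute [instance] ZObj.ac ZObj.mo ZObj.fin

/-- The character `χ_Z(f,g) = Tr_{Z_f}(g)`, computed as the trace of the degree-`f`
projection composed with the action of `g`. -/
noncomputable def chi {k : Type} [Field k] {G : Type} [Group G] [Fintype G]
    {α : G → G → G → kˣ} (Z : ZObj k G α) (f g : G) : k :=
  LinearMap.trace k Z.V (Z.p f ∘ₗ Z.ρ g)

/-!
Conjugating by `ρ(x)` carries `Z_f` onto `Z_{xfx⁻¹}`, and, restricted to `Z_f`,
`ρ(xgx⁻¹) ρ(x)` and `ρ(x) ρ(g)` are both scalar multiples of `ρ(xg) = ρ((xgx⁻¹)x)`, with scalars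
`α(xgx⁻¹,x|f)` and `α(x,g|f)`. Hence the operator whose trace is `χ_Z(xfx⁻¹, xgx⁻¹)` is the
`ρ(x)`-conjugate of `α(x,g|f)/α(xgx⁻¹,x|f)` times the one whose trace is `χ_Z(f,g)`, and
traces are conjugation invariant.
-/

theorem LinearMap.trace_eq_of_comp_eq_comp {R M : Type*} [CommRing R] [AddCommGroup M]
    [Module R M] (e : M ≃ₗ[R] M) {A T : M →ₗ[R] M} (h : A ∘ₗ e = e ∘ₗ T) :
    LinearMap.trace R M A = LinearMap.trace R M T := by
  have hA : A = e.conj T := by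
    ext v
    simpa using congr($h (e.symm v))
  rw [hA, LinearMap.trace_conj']

namespace ZObj

variable {k : Type} [Field k] {G : Type} [Group G] [Fintype G] {α : G → G → G → kˣ}
  (Z : ZObj k G α)

theorem p_comp_ρ_of_commute {f g : G} (hfg : Commute f g) :
    Z.p f ∘ₗ Z.ρ g = Z.ρ g ∘ₗ Z.p f := by
  have hconj : g * f * g⁻¹ = f := by rw [hfg.symm.eq, mul_inv_cancel_right]
  rw [Z.grade, hconj]

theorem chi_eq_trace_ρ_comp_p (f g : G) :
    chi Z f g = LinearMap.trace k Z.V (Z.ρ g ∘ₗ Z.p f) :=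
  LinearMap.trace_comp_comm' _ _

theorem ρ_comp_ρ_comp_p (x y h : G) :
    (Z.ρ x ∘ₗ Z.ρ y) ∘ₗ Z.p h = (((aux2 α x y h)⁻¹ : kˣ) : k) • (Z.ρ (x * y) ∘ₗ Z.p h) := by
  rw [Z.proj, smul_smul, ← Units.val_mul, inv_mul_cancel, Units.val_one, one_smul]

theorem p_comp_ρ_conj_comp_ρ {f g : G} (hfg : Commute f g) (x : G) :
    (Z.p (x * f * x⁻¹) ∘ₗ Z.ρ (x * g * x⁻¹)) ∘ₗ Z.ρ x
      = Z.ρ x ∘ₗ (((aux2 α x g f * (aux2 α (x * g * x⁻¹) x f)⁻¹ : kˣ) : k)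
          • (Z.ρ g ∘ₗ Z.p f)) := by
  have hcomm : Commute (x * f * x⁻¹) (x * g * x⁻¹) := hfg.conj x
  have hyx : x * g * x⁻¹ * x = x * g := inv_mul_cancel_right _ _
  calc (Z.p (x * f * x⁻¹) ∘ₗ Z.ρ (x * g * x⁻¹)) ∘ₗ Z.ρ x
      = Z.ρ (x * g * x⁻¹) ∘ₗ (Z.p (x * f * x⁻¹) ∘ₗ Z.ρ x) := by
        rw [Z.p_comp_ρ_of_commute hcomm, LinearMap.comp_assoc]
    _ = (Z.ρ (x * g * x⁻¹) ∘ₗ Z.ρ x) ∘ₗ Z.p f := by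
        rw [← Z.grade, LinearMap.comp_assoc]
    _ = (((aux2 α (x * g * x⁻¹) x f)⁻¹ : kˣ) : k) • (Z.ρ (x * g) ∘ₗ Z.p f) := by
        rw [Z.ρ_comp_ρ_comp_p, hyx]
    _ = Z.ρ x ∘ₗ (((aux2 α x g f * (aux2 α (x * g * x⁻¹) x f)⁻¹ : kˣ) : k)
          • (Z.ρ g ∘ₗ Z.p f)) := by
        rw [Z.proj, smul_smul, LinearMap.comp_smul, LinearMap.comp_assoc, ← Units.val_mul,
          mul_comm]

end ZObj

theorem stmt13_general {k : Type} [Field k] {G : Type} [Group G] [Fintype G]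
    (α : G → G → G → kˣ)
    (Z : ZObj k G α) (x f g : G) (hfg : Commute f g) :
    chi Z (x * f * x⁻¹) (x * g * x⁻¹)
      = ((aux2 α x g f * (aux2 α (x * g * x⁻¹) x f)⁻¹ : kˣ) : k) * chi Z f g := by
  let e : Z.V ≃ₗ[k] Z.V := LinearEquiv.ofBijective (Z.ρ x) (Z.ρ_bij x)
  rw [chi, LinearMap.trace_eq_of_comp_eq_comp e (Z.p_comp_ρ_conj_comp_ρ hfg x), map_smul,
    Z.chi_eq_trace_ρ_comp_p, smul_eq_mul]

/-- the character of an object `Z` of `Z(G,α)` satisfies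
`χ_Z(xfx⁻¹, xgx⁻¹) = (α(x,g|f)/α(xgx⁻¹,x|f)) χ_Z(f,g)` for all `x ∈ G` and
commuting `f,g ∈ G`. -/
theorem stmt13 {k : Type} [Field k] {G : Type} [Group G] [Fintype G]
    (α : G → G → G → kˣ)
    (hcoc : ∀ f g h l : G,
      α g h l * α f (g * h) l * α f g h = α (f * g) h l * α f g (h * l))
    (hnorm : ∀ f g h : G, f = 1 ∨ g = 1 ∨ h = 1 → α f g h = 1)
    (Z : ZObj k G α) (x f g : G) (hfg : Commute f g) :
    chi Z (x * f * x⁻¹) (x * g * x⁻¹)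
      = ((aux2 α x g f * (aux2 α (x * g * x⁻¹) x f)⁻¹ : kˣ) : k) * chi Z f g :=
  stmt13_general α Z x f g hfg
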